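/- arXiv:2509.26119 — 8 statements merged into one kernel-verified Lean document; each statement's English description precedes it below -/
import Mathlib

section
/- For all natural numbers n ≥ 2 and 0 ≤ w ≤ n, the total number of runs summed over all binary sequences of length n with Hamming weight w equals C(n,w) + 2(n-1)·C(n-2, w-1). -/
/-!
The number of runs of a sequence is one more than the number of positions `i` with
`x i ≠ x (i + 1)`. Identifying a sequence of weight `w` with its support, a `w`-subset of
`Fin n`, and exchanging the two sums, each of the `n - 1` adjacent pairs contributes the number
of `w`-subsets containing exactly one of its two points, which is `2 C(n-2, w-1)`.
-/

/-- The number of runs of a binary sequence: the length of the list after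
merging maximal blocks of consecutive equal symbols. -/
def numRuns (l : List Bool) : ℕ := (l.destutter (· ≠ ·)).length

/-- The Hamming weight (number of ones) of a binary sequence. -/
def wt {n : ℕ} (x : Fin n → Bool) : ℕ :=
  (Finset.univ.filter fun p => x p = true).card

open Finset

theorem List.length_destutter'_ne_ofFn {α : Type*} [DecidableEq α] :
    ∀ {m : ℕ} (x : Fin (m + 1) → α),
      ((List.ofFn fun i : Fin m => x i.succ).destutter' (· ≠ ·) (x 0)).length =
        1 + #{i : Fin m | x i.castSucc ≠ x i.succ}
  | 0, x => by simp
  | m + 1, x => by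
    have ih := List.length_destutter'_ne_ofFn (fun i : Fin (m + 1) => x i.succ)
    rw [List.ofFn_succ, Fin.card_filter_univ_succ']
    simp only [Fin.succ_zero_eq_one, Fin.castSucc_zero, Fin.succ_castSucc] at ih ⊢
    by_cases h : x 0 = x 1
    · simp [h, ih]
    · simp only [ne_eq, h, not_false_eq_true, List.destutter'_cons_pos, List.length_cons, ih,
        Fin.castSucc_succ, ↓reduceIte]
      omega

theorem numRuns_ofFn {m : ℕ} (x : Fin (m + 1) → Bool) :
    numRuns (List.ofFn x) = 1 + #{i : Fin m | x i.castSucc ≠ x i.succ} := by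
  rw [numRuns, List.ofFn_succ, List.destutter_cons', List.length_destutter'_ne_ofFn]

theorem Finset.filter_powersetCard_mem_notMem {α : Type*} [DecidableEq α] {t : Finset α}
    (a b : α) (k : ℕ) :
    {s ∈ t.powersetCard k | a ∈ s ∧ b ∉ s} = {s ∈ (t.erase b).powersetCard k | {a} ⊆ s} := by
  ext s
  simp only [mem_filter, mem_powersetCard, singleton_subset_iff, subset_erase]
  tauto

theorem Finset.card_filter_powersetCard_mem_notMem {α : Type*} [DecidableEq α] {t : Finset α}
    {a b : α} (ha : a ∈ t) (hb : b ∈ t) (hab : a ≠ b) (k : ℕ) :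
    #{s ∈ t.powersetCard (k + 1) | a ∈ s ∧ b ∉ s} = (#t - 2).choose k := by
  rw [filter_powersetCard_mem_notMem, card_filter_powersetCard_subset _ _ _
    (by simpa using mem_erase.2 ⟨hab, ha⟩) (by simp), card_erase_of_mem hb, card_singleton,
    Nat.sub_sub, Nat.add_sub_cancel]

theorem Finset.card_filter_powersetCard_xor {α : Type*} [DecidableEq α] {t : Finset α}
    {a b : α} (ha : a ∈ t) (hb : b ∈ t) (hab : a ≠ b) (w : ℕ) :
    #{s ∈ t.powersetCard w | Xor (a ∈ s) (b ∈ s)} =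
      2 * if w = 0 then 0 else (#t - 2).choose (w - 1) := by
  cases w with
  | zero => simp [xor_def]
  | succ k =>
    have hdisj : Disjoint {s ∈ t.powersetCard (k + 1) | a ∈ s ∧ b ∉ s}
        {s ∈ t.powersetCard (k + 1) | b ∈ s ∧ a ∉ s} :=
      disjoint_filter.2 fun _ _ h h' => h'.2 h.1
    simp only [xor_def, filter_or, card_union_of_disjoint hdisj,
      card_filter_powersetCard_mem_notMem ha hb hab,
      card_filter_powersetCard_mem_notMem hb ha hab.symm]
    rw [if_neg k.succ_ne_zero, Nat.add_sub_cancel, two_mul]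

theorem sum_filter_wt_eq_sum_powersetCard {n w : ℕ} {M : Type*} [AddCommMonoid M]
    (f : (Fin n → Bool) → M) :
    ∑ x with wt x = w, f x = ∑ s ∈ univ.powersetCard w, f fun i => decide (i ∈ s) :=
  sum_nbij' (fun x => ({i | x i = true} : Finset (Fin n))) (fun s i => decide (i ∈ s))
    (fun x hx => by simpa [wt] using (mem_filter.1 hx).2)
    (fun s hs => mem_filter.2 ⟨mem_univ _, by simpa [wt] using (mem_powersetCard.1 hs).2⟩)
    (fun x _ => by ext; simp) (fun s _ => by ext; simp) (fun x _ => by congr; ext; simp)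

theorem stmt_4_general (n w : ℕ) (hn : 2 ≤ n) :
    ∑ x ∈ Finset.univ.filter (fun x : Fin n → Bool => wt x = w),
        numRuns (List.ofFn x)
      = n.choose w + 2 * (n - 1) * (if w = 0 then 0 else (n - 2).choose (w - 1)) := by
  obtain ⟨m, rfl⟩ : ∃ m, n = m + 2 := ⟨n - 2, by omega⟩
  have hpair (i : Fin (m + 1)) :
      #{s ∈ univ.powersetCard w | Xor (i.castSucc ∈ s) (i.succ ∈ s)} =
        2 * if w = 0 then 0 else m.choose (w - 1) := by
    simpa using card_filter_powersetCard_xor (mem_univ _) (mem_univ _)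
      (Fin.castSucc_lt_succ (i := i)).ne w
  calc ∑ x with wt x = w, numRuns (List.ofFn x)
      = ∑ s ∈ univ.powersetCard w,
          (1 + #{i : Fin (m + 1) | Xor (i.castSucc ∈ s) (i.succ ∈ s)}) := by
        rw [sum_filter_wt_eq_sum_powersetCard]
        refine sum_congr rfl fun s _ => ?_
        rw [numRuns_ofFn]
        simp [xor_iff_not_iff]
    _ = (m + 2).choose w + ∑ i : Fin (m + 1),
          #{s ∈ univ.powersetCard w | Xor (i.castSucc ∈ s) (i.succ ∈ s)} := by
        rw [sum_add_distrib, ← card_eq_sum_ones, card_powersetCard, card_univ, Fintype.card_fin]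
        simp only [card_filter]
        rw [sum_comm]
    _ = _ := by
        rw [sum_congr rfl fun i _ => hpair i, sum_const, card_univ, Fintype.card_fin, smul_eq_mul,
          Nat.add_sub_cancel, show m + 2 - 1 = m + 1 by omega]
        ring

/-- For `n ≥ 2` and `0 ≤ w ≤ n`, the total number of runs summed over all binary sequences
of length `n` with Hamming weight `w` equals `C(n,w) + 2(n-1)·C(n-2, w-1)`, with the
convention that `C(n-2, w-1) = 0` when `w = 0`. -/
theorem stmt_4 (n w : ℕ) (hn : 2 ≤ n) (hw : w ≤ n) :
    ∑ x ∈ Finset.univ.filter (fun x : Fin n → Bool => wt x = w),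
        numRuns (List.ofFn x)
      = n.choose w + 2 * (n - 1) * (if w = 0 then 0 else (n - 2).choose (w - 1)) :=
  stmt_4_general n w hn
end

section
/- Let y₀ be a binary sequence of length n-1 with Hamming weight w. Then the number of distinct binary sequences s₁ of length n for which there exists a binary sequence s₀ of length n that is a supersequence of y₀ (obtained by inserting one bit into y₀) and satisfies s₀ ≤ s₁ componentwise, equals 2^(n-w) + w·2^(n-w-1). -/
/-!
Split a sequence `c :: t` at its first bit: it dominates a one-bit insertion into `b :: y`
iff either `t` dominates `b :: y` (the bit was inserted in front) or `b ≤ c` and `t`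
dominates a one-bit insertion into `y`; the first alternative implies that `t` dominates
one too. So a leading `0` of `y` doubles the count, and a leading `1` adds the number
`2 ^ z` of sequences above `1 :: y`, where `z` is the number of zeros of `y`. Induction
gives `(w + 2) * 2 ^ z`, which is `2 ^ (n - w) + w * 2 ^ (n - w - 1)` as `z = n - 1 - w`.
-/

open Finset

section Preorder

variable {α : Type*} [Preorder α] {k : ℕ}

def DominatesSupersequence (y : Fin k → α) (s : Fin (k + 1) → α) : Prop :=
  ∃ s₀ : Fin (k + 1) → α, (List.ofFn y).Sublist (List.ofFn s₀) ∧ s₀ ≤ s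

theorem dominatesSupersequence_of_cons_le {b : α} {y : Fin k → α} {t : Fin (k + 1) → α}
    (h : Fin.cons b y ≤ t) : DominatesSupersequence y t := by
  refine ⟨Fin.cons (t 0) y, ?_, Fin.cons_le.2 ⟨le_rfl, (Fin.cons_le.1 h).2⟩⟩
  simp [List.ofFn_succ]

theorem dominatesSupersequence_cons_cons_iff {b c : α} {y : Fin k → α} {t : Fin (k + 1) → α} :
    DominatesSupersequence (Fin.cons b y) (Fin.cons c t) ↔
      Fin.cons b y ≤ t ∨ b ≤ c ∧ DominatesSupersequence y t := by
  constructor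
  · rintro ⟨s₀, hsub, hle⟩
    induction s₀ using Fin.consCases with
    | _ x u =>
    obtain ⟨hxc, hut⟩ := Fin.cons_le_cons.1 hle
    rw [List.ofFn_succ, List.ofFn_succ, List.sublist_cons_iff] at hsub
    simp only [Fin.cons_zero, Fin.cons_succ] at hsub
    rcases hsub with hsub | ⟨r, ⟨rfl, rfl⟩, hsub⟩
    · have hu : List.ofFn (Fin.cons b y : Fin (k + 1) → α) = List.ofFn u := by
        rw [List.ofFn_succ]
        simpa using hsub.eq_of_length (by simp)
      exact Or.inl (List.ofFn_injective hu ▸ hut)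
    · exact Or.inr ⟨hxc, u, hsub, hut⟩
  · rintro (h | ⟨hbc, u, hsub, hut⟩)
    · exact ⟨Fin.cons c (Fin.cons b y), by simp, Fin.cons_le_cons.2 ⟨le_rfl, h⟩⟩
    · refine ⟨Fin.cons b u, ?_, Fin.cons_le_cons.2 ⟨hbc, hut⟩⟩
      simpa [List.ofFn_succ] using hsub.cons_cons b

theorem dominatesSupersequence_cons_cons_iff_of_le {b c : α} {y : Fin k → α}
    {t : Fin (k + 1) → α} (hbc : b ≤ c) :
    DominatesSupersequence (Fin.cons b y) (Fin.cons c t) ↔ DominatesSupersequence y t := by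
  rw [dominatesSupersequence_cons_cons_iff, and_iff_right hbc]
  exact or_iff_right_of_imp dominatesSupersequence_of_cons_le

theorem dominatesSupersequence_cons_cons_iff_of_not_le {b c : α} {y : Fin k → α}
    {t : Fin (k + 1) → α} (hbc : ¬b ≤ c) :
    DominatesSupersequence (Fin.cons b y) (Fin.cons c t) ↔ Fin.cons b y ≤ t := by
  rw [dominatesSupersequence_cons_cons_iff]
  simp [hbc]

end Preorder

theorem card_filter_fin_cons {α : Type*} [Fintype α] {k : ℕ}
    (P : (Fin (k + 1) → α) → Prop) [DecidablePred P] :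
    #{s | P s} = ∑ a, #{t : Fin k → α | P (Fin.cons a t)} := by
  simp only [card_filter]
  rw [← (Fin.consEquiv fun _ => α).sum_comp, Fintype.sum_prod_type]
  rfl

section Bool

open scoped Classical

variable {k : ℕ}

theorem card_filter_le_eq_two_pow (y : Fin k → Bool) :
    #{t | y ≤ t} = 2 ^ #{i | y i = false} := by
  induction k with
  | zero => simp
  | succ k ih =>
    induction y using Fin.consCases with
    | _ b y =>
    rw [card_filter_fin_cons, Fintype.sum_bool, Fin.card_filter_univ_succ']
    simp only [Fin.cons_le_cons, Fin.cons_zero, Fin.cons_succ]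
    cases b
    · simp [ih, pow_succ, mul_two, add_comm 1]
    · simp [ih, show ¬(true ≤ false) by decide]

theorem card_filter_dominatesSupersequence (y : Fin k → Bool) :
    #{s | DominatesSupersequence y s} = (#{i | y i = true} + 2) * 2 ^ #{i | y i = false} := by
  induction k with
  | zero =>
    have hall (s : Fin 1 → Bool) : DominatesSupersequence y s := ⟨s, by simp, le_rfl⟩
    simp [hall]
  | succ k ih =>
    induction y using Fin.consCases with
    | _ b y =>
    rw [card_filter_fin_cons, Fintype.sum_bool, Fin.card_filter_univ_succ',
      Fin.card_filter_univ_succ']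
    cases b
    · simp only [dominatesSupersequence_cons_cons_iff_of_le (Bool.false_le _), ih,
        Fin.cons_zero, Fin.cons_succ, Bool.false_eq_true, ↓reduceIte, zero_add]
      ring
    · simp only [dominatesSupersequence_cons_cons_iff_of_le le_rfl,
        dominatesSupersequence_cons_cons_iff_of_not_le (show ¬(true ≤ false) by decide),
        ih, card_filter_le_eq_two_pow, Fin.card_filter_univ_succ', Fin.cons_zero, Fin.cons_succ,
        Bool.true_eq_false, ↓reduceIte, zero_add]
      ring

end Bool

/-- Let `y₀` be a binary sequence of length `n-1` (with `n ≥ 1`) of Hamming weight `w`.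
The number of binary sequences `s₁` of length `n` for which there exists a binary
sequence `s₀` of length `n` that is a supersequence of `y₀` (obtained by inserting one
bit into `y₀`) and satisfies `s₀ ≤ s₁` componentwise equals `2^(n-w) + w·2^(n-w-1)`. -/
theorem stmt_5 (n : ℕ) (hn : 1 ≤ n) (y₀ : Fin (n - 1) → Bool) (w : ℕ)
    (hw : (Finset.univ.filter fun p => y₀ p = true).card = w) :
    {s₁ : Fin n → Bool | ∃ s₀ : Fin n → Bool,
        (List.ofFn y₀).Sublist (List.ofFn s₀) ∧ ∀ p, s₀ p ≤ s₁ p}.ncard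
      = 2 ^ (n - w) + w * 2 ^ (n - w - 1) := by
  obtain ⟨k, rfl⟩ : ∃ k, n = k + 1 := ⟨n - 1, by omega⟩
  revert y₀
  rw [Nat.add_sub_cancel]
  intro y₀ hw
  classical
  have hzeros : w + #{i | y₀ i = false} = k := by
    simpa [← hw] using card_filter_add_card_filter_not (s := univ) (fun i => y₀ i = true)
  trans #{s | DominatesSupersequence y₀ s}
  · rw [← Set.ncard_coe_finset, coe_filter_univ]
    rfl
  rw [card_filter_dominatesSupersequence, hw]
  generalize #{i | y₀ i = false} = z at hzeros ⊢
  subst hzeros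
  rw [show w + z + 1 - w = z + 1 by omega, Nat.add_sub_cancel, pow_succ]
  ring
end

section
/- The number of pairs (y₀, s₁) with y₀ ∈ {0,1}^(n-1), s₁ ∈ {0,1}^n such that there exists a length-n supersequence s₀ of y₀ with s₀ ≤ s₁ componentwise equals 2·3^(n-1) + (n-1)·3^(n-2). -/
/-!
Write `N m` for the number of pairs `(y, s)` with `y` of length `m` and `s` of length `m + 1`.
Compare the first bits `a` of `y` and `b` of `s`. If `a ≤ b`, a witness may keep its first bit
matched with `a`, and the condition reduces to the tails. Otherwise `a = 1`, `b = 0`, the inserted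
bit must come first, and the condition becomes `y ≤ tail s`, which has `3 ^ m` solutions since
each position contributes one of the three pairs `u ≤ v` of bits. Hence
`N (m + 1) = 3 N m + 3 ^ m` with `N 0 = 2`.
-/

open Finset

theorem sum_fin_succ_pi {β M : Type*} [Fintype β] [AddCommMonoid M] {n : ℕ}
    (f : (Fin (n + 1) → β) → M) : ∑ x, f x = ∑ a, ∑ v : Fin n → β, f (Fin.cons a v) := by
  rw [← (Fin.consEquiv fun _ => β).sum_comp, Fintype.sum_prod_type]
  rfl

open scoped Classical in
theorem ncard_setOf_eq_sum {α : Type*} [Fintype α] (P : α → Prop) :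
    {x | P x}.ncard = ∑ x, if P x then 1 else 0 := by
  rw [Set.ncard_eq_toFinset_card', Set.toFinset_ofPred, card_filter]

theorem ncard_setOf_prod_fin_succ_pi {β : Type*} [Fintype β] {m n : ℕ}
    (P : (Fin (m + 1) → β) × (Fin (n + 1) → β) → Prop) :
    {q | P q}.ncard =
      ∑ a, ∑ b, {q : (Fin m → β) × (Fin n → β) | P (Fin.cons a q.1, Fin.cons b q.2)}.ncard := by
  classical
  simp only [ncard_setOf_eq_sum]
  rw [← ((Fin.consEquiv _).prodCongr (Fin.consEquiv _)).sum_comp,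
    ← (Equiv.prodProdProdComm β (Fin m → β) β (Fin n → β)).symm.sum_comp]
  simp only [Fintype.sum_prod_type]
  rfl

theorem ncard_setOf_fst_le_snd_pi (ι α : Type*) [Finite ι] [Preorder α] :
    {p : (ι → α) × (ι → α) | p.1 ≤ p.2}.ncard = {p : α × α | p.1 ≤ p.2}.ncard ^ Nat.card ι := by
  rw [← Nat.card_coe_set_eq, ← Nat.card_coe_set_eq, ← Nat.card_fun]
  exact Nat.card_congr <|
    (Equiv.subtypeEquiv (Equiv.arrowProdEquivProdArrow ι (fun _ => α) fun _ => α).symm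
      fun _ => Iff.rfl).trans (Equiv.subtypePiEquivPi (p := fun _ q => q.1 ≤ q.2))

theorem ncard_setOf_fst_le_snd_fin_bool (k : ℕ) :
    {p : (Fin k → Bool) × (Fin k → Bool) | p.1 ≤ p.2}.ncard = 3 ^ k := by
  rw [ncard_setOf_fst_le_snd_pi, ncard_setOf_eq_sum, Nat.card_eq_fintype_card, Fintype.card_fin]
  simp only [Fintype.sum_prod_type, Fintype.sum_bool]
  simp [Bool.le_iff_imp]

theorem ncard_setOf_cons_true_le (m : ℕ) :
    {q : (Fin m → Bool) × (Fin (m + 1) → Bool) | Fin.cons true q.1 ≤ q.2}.ncard = 3 ^ m := by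
  classical
  rw [← ncard_setOf_fst_le_snd_fin_bool, ncard_setOf_eq_sum, ncard_setOf_eq_sum,
    Fintype.sum_prod_type, Fintype.sum_prod_type]
  refine sum_congr rfl fun y _ => ?_
  rw [sum_fin_succ_pi, Fintype.sum_bool]
  simp only [Fin.cons_le_cons, le_refl, true_and, (by decide : ¬true ≤ false), false_and,
    if_false, sum_const_zero, add_zero]

def HasSupersequenceLE {α : Type*} [Preorder α] {m : ℕ} (y : Fin m → α) (s : Fin (m + 1) → α) :
    Prop :=
  ∃ s₀ : Fin (m + 1) → α, (List.ofFn y).Sublist (List.ofFn s₀) ∧ s₀ ≤ s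

section HasSupersequenceLE

variable {α : Type*} [Preorder α] [OrderBot α] {m : ℕ} {a b : α} {y : Fin m → α}
  {s : Fin (m + 1) → α}

theorem hasSupersequenceLE_of_fin_zero (y : Fin 0 → α) (s : Fin 1 → α) :
    HasSupersequenceLE y s :=
  ⟨⊥, by simp, bot_le⟩

theorem hasSupersequenceLE_of_cons_le (h : Fin.cons a y ≤ s) : HasSupersequenceLE y s :=
  ⟨Fin.cons ⊥ y, by simp, (Fin.cons_le_cons.2 ⟨bot_le, le_rfl⟩).trans h⟩

theorem hasSupersequenceLE_cons_cons :
    HasSupersequenceLE (Fin.cons a y) (Fin.cons b s) ↔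
      Fin.cons a y ≤ s ∨ a ≤ b ∧ HasSupersequenceLE y s := by
  unfold HasSupersequenceLE
  rw [Fin.exists_fin_succ_pi]
  simp only [List.ofFn_cons, Fin.cons_le_cons, List.sublist_cons_iff, List.cons.injEq]
  constructor
  · rintro ⟨c, t, hsub | ⟨_, ⟨rfl, rfl⟩, hsub⟩, hcb, hts⟩
    · have hyt : Fin.cons a y = t := by
        rw [← List.ofFn_inj, List.ofFn_cons]
        exact hsub.eq_of_length (by simp)
      exact Or.inl (hyt ▸ hts)
    · exact Or.inr ⟨hcb, t, hsub, hts⟩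
  · rintro (h | ⟨hab, t, hsub, hts⟩)
    · exact ⟨⊥, Fin.cons a y, Or.inl (by rw [List.ofFn_cons]), bot_le, h⟩
    · exact ⟨a, t, Or.inr ⟨_, ⟨rfl, rfl⟩, hsub⟩, hab, hts⟩

theorem hasSupersequenceLE_cons_cons_of_le (hab : a ≤ b) :
    HasSupersequenceLE (Fin.cons a y) (Fin.cons b s) ↔ HasSupersequenceLE y s := by
  rw [hasSupersequenceLE_cons_cons]
  exact ⟨fun h => h.elim hasSupersequenceLE_of_cons_le And.right, fun h => Or.inr ⟨hab, h⟩⟩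

theorem hasSupersequenceLE_cons_cons_of_not_le (hab : ¬a ≤ b) :
    HasSupersequenceLE (Fin.cons a y) (Fin.cons b s) ↔ Fin.cons a y ≤ s := by
  simp [hasSupersequenceLE_cons_cons, hab]

end HasSupersequenceLE

theorem ncard_hasSupersequenceLE_succ (m : ℕ) :
    {q : (Fin (m + 1) → Bool) × (Fin (m + 2) → Bool) | HasSupersequenceLE q.1 q.2}.ncard =
      3 * {q : (Fin m → Bool) × (Fin (m + 1) → Bool) | HasSupersequenceLE q.1 q.2}.ncard
        + 3 ^ m := by
  rw [ncard_setOf_prod_fin_succ_pi, ← ncard_setOf_cons_true_le]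
  simp only [Fintype.sum_bool,
    hasSupersequenceLE_cons_cons_of_le (le_refl true),
    hasSupersequenceLE_cons_cons_of_le (le_refl false),
    hasSupersequenceLE_cons_cons_of_le (Bool.false_le true),
    hasSupersequenceLE_cons_cons_of_not_le (by decide : ¬true ≤ false)]
  ring

theorem ncard_hasSupersequenceLE (m : ℕ) :
    {q : (Fin m → Bool) × (Fin (m + 1) → Bool) | HasSupersequenceLE q.1 q.2}.ncard
      = 2 * 3 ^ m + m * 3 ^ (m - 1) := by
  induction m with
  | zero => simp [hasSupersequenceLE_of_fin_zero, Set.ncard_univ]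
  | succ k ih =>
    rw [ncard_hasSupersequenceLE_succ, ih]
    cases k with
    | zero => norm_num
    | succ j =>
      simp only [Nat.add_sub_cancel, pow_succ]
      ring

/-- The number of pairs `(y₀, s₁)` with `y₀ ∈ {0,1}^(n-1)`, `s₁ ∈ {0,1}^n` such that there
exists a length-`n` supersequence `s₀` of `y₀` with `s₀ ≤ s₁` componentwise equals
`2·3^(n-1) + (n-1)·3^(n-2)`. -/
theorem stmt_6 (n : ℕ) (hn : 1 ≤ n) :
    {q : (Fin (n - 1) → Bool) × (Fin n → Bool) | ∃ s₀ : Fin n → Bool,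
        (List.ofFn q.1).Sublist (List.ofFn s₀) ∧ ∀ p, s₀ p ≤ q.2 p}.ncard
      = 2 * 3 ^ (n - 1) + (n - 1) * 3 ^ (n - 2) := by
  obtain ⟨m, rfl⟩ := Nat.exists_eq_add_of_le' hn
  exact ncard_hasSupersequenceLE m
end

section
/- Let s be a sequence in {0,1,...,k}^n and let m be the number of positions where s equals k-1 or k. Then the composite error ball of radius (1,0,...,0) centered at s, consisting of all valid reconstructions obtainable by at most one substitution in the first channel, has size exactly 1 + m. -/
/-- Row `j` of the decomposition of a `k`-resolution composite binary sequence
`s ∈ {0,…,k}^n`: position `p` of row `j` is `1` iff `s p ≥ k - j`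
(so letter `i` decomposes to the column `0^(k-i) 1^i`). -/
def decompRow (k n : ℕ) (s : Fin n → Fin (k + 1)) (j : Fin k) (p : Fin n) : Bool :=
  decide (k - (j : ℕ) ≤ (s p : ℕ))

/-- A column `c : Fin k → Bool` is valid (reconstructible) iff it is nondecreasing,
i.e. of the form `0^(k-i) 1^i`. -/
def validCol (k : ℕ) (c : Fin k → Bool) : Prop :=
  ∀ j j' : Fin k, j ≤ j' → c j = true → c j' = true

/-- The letter reconstructed from a column: the number of ones in the column. -/
def reconAt (k : ℕ) (c : Fin k → Bool) : ℕ :=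
  (Finset.univ.filter fun j => c j = true).card

/-- The composite error ball of radius `(e 0, …, e (k-1))` centered at `s`:
all valid reconstructions `y` of rows `r` where row `j` differs from the `j`-th
decomposed row of `s` in at most `e j` positions. -/
def ballTuple (k n : ℕ) (e : Fin k → ℕ) (s : Fin n → Fin (k + 1)) :
    Set (Fin n → Fin (k + 1)) :=
  { y | ∃ r : Fin k → Fin n → Bool,
      (∀ j, hammingDist (r j) (decompRow k n s j) ≤ e j) ∧
      (∀ p, validCol k (fun j => r j p)) ∧
      (∀ p, (y p : ℕ) = reconAt k (fun j => r j p)) }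

/-- The composite error ball of total radius `e` centered at `s`: all valid
reconstructions `y` of rows `r` differing from the decomposed rows of `s`
in at most `e` positions in total. -/
def ballTotal (k n : ℕ) (e : ℕ) (s : Fin n → Fin (k + 1)) :
    Set (Fin n → Fin (k + 1)) :=
  { y | ∃ r : Fin k → Fin n → Bool,
      (∑ j, hammingDist (r j) (decompRow k n s j)) ≤ e ∧
      (∀ p, validCol k (fun j => r j p)) ∧
      (∀ p, (y p : ℕ) = reconAt k (fun j => r j p)) }

/-! Rows `1, …, k-1` of a word in the ball agree with those of `s`, so the word is determined by
its row `0`, which differs from that of `s` in at most one position `p`. Flipping the top bit of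
the column `0^(k-v) 1^v` yields a valid column exactly when `v ∈ {k-1, k}`, and then it exchanges
`k-1` and `k`; any other flip puts a `1` above a `0`. Hence the ball consists of `s` and one
distinct neighbour for each position where `s` is `k-1` or `k`. -/

open Function Finset

def letterCol (k v : ℕ) : Fin k → Bool := fun j => decide (k - (j : ℕ) ≤ v)

theorem hammingDist_le_one_iff {ι : Type*} {β : ι → Type*} [Fintype ι] [∀ i, DecidableEq (β i)]
    {x y : ∀ i, β i} : hammingDist x y ≤ 1 ↔ ∀ p, x p ≠ y p → ∀ q, x q ≠ y q → p = q := by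
  simp [hammingDist, card_le_one]

theorem hammingDist_update_le_one {ι β : Type*} [Fintype ι] [DecidableEq ι] [DecidableEq β]
    (x : ι → β) (p : ι) (b : β) : hammingDist (update x p b) x ≤ 1 := by
  have (q) (hq : update x p b q ≠ x q) : q = p := by_contra fun h => hq (update_of_ne h b x)
  exact hammingDist_le_one_iff.2 fun q hq q' hq' => by rw [this q hq, this q' hq']

theorem injective_update_of_forall_ne {ι β : Type*} [DecidableEq ι] {x g : ι → β}
    (hg : ∀ p, g p ≠ x p) : Injective fun p => update x p (g p) := by
  intro p q hpq
  by_contra hne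
  have := congrFun hpq p
  simp only [update_self, update_of_ne hne] at this
  exact hg p this

theorem card_fin_filter_sub_le (k v : ℕ) (hv : v ≤ k) :
    #{j : Fin k | k - (j : ℕ) ≤ v} = v := by
  rw [card_filter, Fin.sum_univ_eq_sum_range (fun i => if k - i ≤ v then 1 else 0), ← card_filter,
    show (range k).filter (fun i => k - i ≤ v) = Ico (k - v) k by ext i; simp; omega,
    Nat.card_Ico]
  omega

theorem validCol_letterCol (k v : ℕ) : validCol k (letterCol k v) := by
  intro j j' hjj' hj
  simp only [letterCol, decide_eq_true_eq, Fin.le_def] at hj hjj' ⊢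
  omega

theorem reconAt_letterCol {k v : ℕ} (hv : v ≤ k) : reconAt k (letterCol k v) = v := by
  simpa [reconAt, letterCol] using card_fin_filter_sub_le k v hv

/-- Exchanges `k - 1` and `k`; it is only ever applied to these two letters. -/
def swapTop (k : ℕ) (v : Fin (k + 1)) : Fin (k + 1) :=
  if (v : ℕ) = k then ⟨k - 1, by omega⟩ else Fin.last k

theorem swapTop_ne {k : ℕ} (hk : 0 < k) (v : Fin (k + 1)) : swapTop k v ≠ v := by
  unfold swapTop
  split_ifs with h <;> simp [Fin.ext_iff] <;> omega

theorem update_letterCol_not {k : ℕ} (hk : 0 < k) {v : Fin (k + 1)}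
    (hv : (v : ℕ) = k - 1 ∨ (v : ℕ) = k) :
    update (letterCol k v) ⟨0, hk⟩ (!letterCol k v ⟨0, hk⟩) = letterCol k (swapTop k v) := by
  funext j
  rcases eq_or_ne j ⟨0, hk⟩ with rfl | hj
  · unfold swapTop; split_ifs with h <;> simp [letterCol, h] <;> omega
  · have : (j : ℕ) ≠ 0 := fun h => hj (Fin.ext h)
    unfold swapTop; split_ifs <;> simp [letterCol, update_of_ne hj] <;> omega

theorem not_validCol_update_letterCol {k v : ℕ} (hk : 0 < k) (hv : v + 1 < k) :
    ¬ validCol k (update (letterCol k v) ⟨0, hk⟩ true) := by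
  intro h
  set one : Fin k := ⟨1, by omega⟩
  have := h ⟨0, hk⟩ one (by simp [one, Fin.le_def]) (by simp)
  simp [letterCol, one] at this
  omega

theorem validCol_update_letterCol_not_iff {k : ℕ} (hk : 0 < k) (v : Fin (k + 1)) :
    validCol k (update (letterCol k v) ⟨0, hk⟩ (!letterCol k v ⟨0, hk⟩)) ↔
      (v : ℕ) = k - 1 ∨ (v : ℕ) = k := by
  refine ⟨fun h => ?_, fun hv => update_letterCol_not hk hv ▸ validCol_letterCol _ _⟩
  by_contra hv
  refine not_validCol_update_letterCol hk (v := v) (by omega) ?_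
  convert h
  simp [letterCol]
  omega

section Ball

variable {k n : ℕ} {s : Fin n → Fin (k + 1)}

theorem column_update_decompRow (hk : 0 < k) (ρ : Fin n → Bool) (p : Fin n) :
    (fun j => update (decompRow k n s) ⟨0, hk⟩ ρ j p) =
      update (letterCol k (s p)) ⟨0, hk⟩ (ρ p) := by
  funext j
  rcases eq_or_ne j ⟨0, hk⟩ with rfl | hj
  · simp
  · simp [update_of_ne hj, decompRow, letterCol]

theorem mem_ballTuple_iff_exists_row_zero (hk : 0 < k) {y : Fin n → Fin (k + 1)} :
    y ∈ ballTuple k n (fun j => if (j : ℕ) = 0 then 1 else 0) s ↔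
      ∃ ρ : Fin n → Bool, hammingDist ρ (decompRow k n s ⟨0, hk⟩) ≤ 1 ∧
        ∀ p, validCol k (update (letterCol k (s p)) ⟨0, hk⟩ (ρ p)) ∧
          (y p : ℕ) = reconAt k (update (letterCol k (s p)) ⟨0, hk⟩ (ρ p)) := by
  constructor
  · rintro ⟨r, hdist, hvalid, hrecon⟩
    have hr : r = update (decompRow k n s) ⟨0, hk⟩ (r ⟨0, hk⟩) := by
      funext j
      rcases eq_or_ne j ⟨0, hk⟩ with rfl | hj
      · simp
      · have : (j : ℕ) ≠ 0 := fun h => hj (Fin.ext h)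
        simpa [update_of_ne hj, this] using hdist j
    refine ⟨r ⟨0, hk⟩, by simpa using hdist ⟨0, hk⟩, fun p => ?_⟩
    rw [← column_update_decompRow hk, ← hr]
    exact ⟨hvalid p, hrecon p⟩
  · rintro ⟨ρ, hdist, hcol⟩
    refine ⟨update (decompRow k n s) ⟨0, hk⟩ ρ, fun j => ?_, fun p => ?_, fun p => ?_⟩
    · rcases eq_or_ne j ⟨0, hk⟩ with rfl | hj
      · simpa using hdist
      · simp [update_of_ne hj]
    · rw [column_update_decompRow hk]; exact (hcol p).1
    · rw [column_update_decompRow hk]; exact (hcol p).2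

theorem mem_ballTuple_iff (hk : 0 < k) {y : Fin n → Fin (k + 1)} :
    y ∈ ballTuple k n (fun j => if (j : ℕ) = 0 then 1 else 0) s ↔
      y = s ∨ ∃ p, ((s p : ℕ) = k - 1 ∨ (s p : ℕ) = k) ∧ y = update s p (swapTop k (s p)) := by
  have hkeep (v : Fin (k + 1)) :
      validCol k (update (letterCol k v) ⟨0, hk⟩ (letterCol k v ⟨0, hk⟩)) ∧
        reconAt k (update (letterCol k v) ⟨0, hk⟩ (letterCol k v ⟨0, hk⟩)) = v := by
    rw [update_eq_self]
    exact ⟨validCol_letterCol _ _, reconAt_letterCol v.is_le⟩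
  have hswap (v : Fin (k + 1)) (hv : (v : ℕ) = k - 1 ∨ (v : ℕ) = k) :
      validCol k (update (letterCol k v) ⟨0, hk⟩ (!letterCol k v ⟨0, hk⟩)) ∧
        reconAt k (update (letterCol k v) ⟨0, hk⟩ (!letterCol k v ⟨0, hk⟩)) = swapTop k v := by
    rw [update_letterCol_not hk hv]
    exact ⟨validCol_letterCol _ _, reconAt_letterCol (swapTop k v).is_le⟩
  rw [mem_ballTuple_iff_exists_row_zero hk]
  constructor
  · rintro ⟨ρ, hdist, hcol⟩
    have hsame (q) (hq : ρ q = letterCol k (s q) ⟨0, hk⟩) : y q = s q := by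
      rw [Fin.ext_iff, (hcol q).2, hq, (hkeep (s q)).2]
    by_cases hflip : ∃ p, ρ p ≠ decompRow k n s ⟨0, hk⟩ p
    · obtain ⟨p, hp⟩ := hflip
      have hρp : ρ p = !letterCol k (s p) ⟨0, hk⟩ := Bool.eq_not_iff.2 hp
      have hv := (validCol_update_letterCol_not_iff hk (s p)).1 (hρp ▸ (hcol p).1)
      refine .inr ⟨p, hv, funext fun q => ?_⟩
      rcases eq_or_ne q p with rfl | hq
      · rw [update_self, Fin.ext_iff, (hcol q).2, hρp, (hswap (s q) hv).2]
      · rw [update_of_ne hq]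
        exact hsame q (by_contra fun h => hq (hammingDist_le_one_iff.1 hdist q h p hp))
    · exact .inl (funext fun q => hsame q (not_exists_not.1 hflip q))
  · rintro (rfl | ⟨p, hv, rfl⟩)
    · exact ⟨decompRow k n y ⟨0, hk⟩, by simp, fun p => ⟨(hkeep (y p)).1, (hkeep (y p)).2.symm⟩⟩
    · refine ⟨update (decompRow k n s ⟨0, hk⟩) p (!decompRow k n s ⟨0, hk⟩ p),
        hammingDist_update_le_one _ _ _, fun q => ?_⟩
      rcases eq_or_ne q p with rfl | hq
      · simp only [update_self]
        exact ⟨(hswap (s q) hv).1, (hswap (s q) hv).2.symm⟩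
      · simp only [update_of_ne hq]
        exact ⟨(hkeep (s q)).1, (hkeep (s q)).2.symm⟩

end Ball

/-- For `s ∈ {0,…,k}^n` with `m` positions equal to `k-1` or `k`, the composite error
ball of radius `(1,0,…,0)` (at most one substitution in the first channel) centered
at `s` has size exactly `1 + m`. -/
theorem stmt_7 (k n : ℕ) (hk : 0 < k) (s : Fin n → Fin (k + 1)) :
    (ballTuple k n (fun j => if (j : ℕ) = 0 then 1 else 0) s).ncard
      = 1 + (Finset.univ.filter fun p =>
          (s p : ℕ) = k - 1 ∨ (s p : ℕ) = k).card := by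
  set m : Finset (Fin n) := {p | (s p : ℕ) = k - 1 ∨ (s p : ℕ) = k}
  have hball : ballTuple k n (fun j => if (j : ℕ) = 0 then 1 else 0) s =
      ↑(insert s (m.image fun p => update s p (swapTop k (s p)))) := by
    ext y
    simp [mem_ballTuple_iff hk, m, eq_comm]
  have hs : s ∉ m.image fun p => update s p (swapTop k (s p)) := by
    simp only [mem_image, not_exists, not_and]
    exact fun p _ h => swapTop_ne hk (s p) (by simpa using congrFun h p)
  rw [hball, Set.ncard_coe_finset, card_insert_of_notMem hs, add_comm,
    card_image_of_injective _ (injective_update_of_forall_ne fun p => swapTop_ne hk (s p))]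
end

section
/- Let s be a sequence in {0,1,...,k}^n and let m be the number of positions where s takes a value in {1,...,k-1}. Then the composite error ball of radius 1 centered at s, consisting of all valid reconstructions obtainable by at most one substitution in any one of the k channels, has size exactly 1 + n + m. -/
/-!
A valid (nondecreasing) column is the unary encoding `0^(k-a) 1^a` of the letter `a` it
reconstructs, and the encodings of `a` and `b` differ in `|a - b|` places. Summing over
positions, the ball of total radius `e` around `s` is the `ℓ¹`-ball of radius `e` in
`{0,…,k}^n`. The `ℓ¹`-ball of radius `1` consists of `s` and, for each position `p`, the words
changing `s p` to a neighbour in `{0,…,k}`; for `k > 0` there are two neighbours when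
`0 < s p < k` and one otherwise.
-/

open Finset Function

lemma sum_hammingDist_transpose {ι κ β : Type*} [Fintype ι] [Fintype κ] [DecidableEq β]
    (x y : ι → κ → β) :
    ∑ i, hammingDist (x i) (y i) = ∑ j, hammingDist (fun i => x i j) (fun i => y i j) := by
  simp only [hammingDist, card_filter]
  exact sum_comm

lemma card_filter_fin_eq_card_filter_range {k : ℕ} (P : ℕ → Prop) [DecidablePred P] :
    #{j : Fin k | P j} = #{m ∈ range k | P m} := by
  simp only [card_filter]
  exact Fin.sum_univ_eq_sum_range (fun m => if P m then 1 else 0) k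

section UnitBall

variable {ι α : Type*} [Fintype ι] [DecidableEq ι] (d : α → α → ℕ)

lemma sum_update_eq_single (hd : ∀ a, d a a = 0) (s : ι → α) (i : ι) (a : α) :
    ∑ j, d (update s i a j) (s j) = d a (s i) := by
  rw [Fintype.sum_eq_single i fun j hj => by rw [update_of_ne hj, hd], update_self]

lemma sum_le_one_iff_eq_or_eq_update (hd : ∀ a b, d a b = 0 ↔ a = b) (s y : ι → α) :
    ∑ j, d (y j) (s j) ≤ 1 ↔ y = s ∨ ∃ i a, d a (s i) = 1 ∧ update s i a = y := by
  constructor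
  · intro hy
    by_cases hys : y = s
    · exact .inl hys
    obtain ⟨i, hi⟩ : ∃ i, y i ≠ s i := by simpa [funext_iff] using hys
    have hsplit := add_sum_erase univ (fun j => d (y j) (s j)) (mem_univ i)
    have hpos : d (y i) (s i) ≠ 0 := fun h => hi ((hd _ _).1 h)
    have hrest : ∀ j ∈ univ.erase i, d (y j) (s j) = 0 :=
      sum_eq_zero_iff.1 (by omega)
    refine .inr ⟨i, y i, by omega, funext fun j => ?_⟩
    rcases eq_or_ne j i with rfl | hji
    · exact update_self ..
    · rw [update_of_ne hji, ((hd _ _).1 (hrest j (mem_erase.2 ⟨hji, mem_univ j⟩))).symm]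
  · have hd0 a : d a a = 0 := (hd a a).2 rfl
    rintro (rfl | ⟨i, a, ha, rfl⟩)
    · simp [hd0]
    · rw [sum_update_eq_single d hd0, ha]

theorem ncard_setOf_sum_le_one [Fintype α] [DecidableEq α] (hd : ∀ a b, d a b = 0 ↔ a = b)
    (s : ι → α) :
    {y : ι → α | ∑ j, d (y j) (s j) ≤ 1}.ncard = 1 + ∑ i, #{a | d a (s i) = 1} := by
  have hd0 a : d a a = 0 := (hd a a).2 rfl
  have hne {i a} (ha : a ∈ ({a | d a (s i) = 1} : Finset α)) : a ≠ s i := by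
    rintro rfl; simp [hd0] at ha
  have hball : {y : ι → α | ∑ j, d (y j) (s j) ≤ 1}
      = ↑(insert s
          (univ.biUnion fun i => ({a | d a (s i) = 1} : Finset α).image (update s i))) := by
    ext y
    simp [sum_le_one_iff_eq_or_eq_update d hd, eq_comm]
  have hs : s ∉ univ.biUnion fun i => ({a | d a (s i) = 1} : Finset α).image (update s i) := by
    simp only [mem_biUnion, mem_image, not_exists, not_and]
    intro i _ a ha hupd
    exact hne ha (by simpa using congrFun hupd i)
  have hdisj : ((univ : Finset ι) : Set ι).PairwiseDisjoint
      fun i => ({a | d a (s i) = 1} : Finset α).image (update s i) := by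
    intro i _ i' _ hii'
    simp only [onFun, disjoint_left, mem_image, not_exists, not_and]
    rintro _ ⟨a, ha, rfl⟩ a' _ hupd
    exact hne ha (by simpa [update_of_ne hii'] using (congrFun hupd i).symm)
  rw [hball, Set.ncard_coe_finset, card_insert_of_notMem hs, card_biUnion hdisj, add_comm]
  simp only [card_image_of_injective _ (update_injective s _)]

end UnitBall

lemma card_filter_dist_eq_one {k : ℕ} (hk : 0 < k) (a : Fin (k + 1)) :
    #{v : Fin (k + 1) | Nat.dist v a = 1}
      = 1 + if (a : ℕ) ≠ 0 ∧ (a : ℕ) ≠ k then 1 else 0 := by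
  obtain ⟨a, ha⟩ := a
  rw [card_filter_fin_eq_card_filter_range fun m => Nat.dist m a = 1]
  rcases Nat.eq_zero_or_pos a with rfl | ha0
  · have : {m ∈ range (k + 1) | Nat.dist m 0 = 1} = {1} := by
      ext m; simp only [mem_filter, mem_range, mem_singleton]; unfold Nat.dist; omega
    simp [this]
  rcases (Nat.lt_succ_iff.1 ha).eq_or_lt with rfl | hak
  · have : {m ∈ range (a + 1) | Nat.dist m a = 1} = {a - 1} := by
      ext m; simp only [mem_filter, mem_range, mem_singleton]; unfold Nat.dist; omega
    simp [this]
  · have : {m ∈ range (k + 1) | Nat.dist m a = 1} = {a - 1, a + 1} := by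
      ext m; simp only [mem_filter, mem_range, mem_insert, mem_singleton]; unfold Nat.dist; omega
    rw [this, card_pair (by omega), if_pos (show a ≠ 0 ∧ a ≠ k by omega)]

/-- The column `0^(k-a) 1^a` of the letter `a`. -/
def unaryCol (k a : ℕ) : Fin k → Bool := fun j => decide (k ≤ a + j)

section UnaryColumn

variable {k : ℕ}

lemma decompRow_eq_unaryCol {n : ℕ} (s : Fin n → Fin (k + 1)) (j : Fin k) :
    decompRow k n s j = fun p => unaryCol k (s p) j := by
  funext p
  simp only [decompRow, unaryCol, decide_eq_decide]
  omega

lemma validCol_unaryCol (a : ℕ) : validCol k (unaryCol k a) := by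
  intro j j' hjj' hj
  simp only [unaryCol, decide_eq_true_eq] at hj ⊢
  have : (j : ℕ) ≤ j' := hjj'
  omega

lemma reconAt_unaryCol {a : ℕ} (ha : a ≤ k) : reconAt k (unaryCol k a) = a := by
  have hones : {m ∈ range k | k ≤ a + m} = Ico (k - a) k := by
    ext m; simp only [mem_filter, mem_range, mem_Ico]; omega
  simp only [reconAt, unaryCol, decide_eq_true_eq]
  rw [card_filter_fin_eq_card_filter_range (fun m => k ≤ a + m), hones, Nat.card_Ico]
  omega

lemma validCol.eq_unaryCol {c : Fin k → Bool} (hc : validCol k c) :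
    c = unaryCol k (reconAt k c) := by
  funext j
  unfold reconAt
  cases hcj : c j
  case true =>
    have : #(Ici j) ≤ #{j' | c j' = true} := card_le_card fun j' hj' => by
      simp only [mem_Ici, mem_filter, mem_univ, true_and] at hj' ⊢
      exact hc j j' hj' hcj
    rw [Fin.card_Ici] at this
    simp only [unaryCol, Bool.true_eq, decide_eq_true_eq]
    omega
  case false =>
    have : #{j' | c j' = true} ≤ #(Ioi j) := card_le_card fun j' hj' => by
      simp only [mem_Ioi, mem_filter, mem_univ, true_and] at hj' ⊢
      by_contra! hle
      simpa [hcj] using hc j' j hle hj'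
    rw [Fin.card_Ioi] at this
    simp only [unaryCol, Bool.false_eq, decide_eq_false_iff_not]
    omega

lemma hammingDist_unaryCol {a b : ℕ} (ha : a ≤ k) (hb : b ≤ k) :
    hammingDist (unaryCol k a) (unaryCol k b) = Nat.dist a b := by
  wlog hab : a ≤ b generalizing a b
  · rw [hammingDist_comm, Nat.dist_comm]
    exact this hb ha (by omega)
  have hdiff :
      {m ∈ range k | decide (k ≤ a + m) ≠ decide (k ≤ b + m)} = Ico (k - b) (k - a) := by
    ext m; simp only [mem_filter, mem_range, mem_Ico, ne_eq, decide_eq_decide]; omega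
  calc hammingDist (unaryCol k a) (unaryCol k b)
      = #{m ∈ range k | decide (k ≤ a + m) ≠ decide (k ≤ b + m)} :=
        card_filter_fin_eq_card_filter_range fun m => decide (k ≤ a + m) ≠ decide (k ≤ b + m)
    _ = Nat.dist a b := by rw [hdiff, Nat.card_Ico, Nat.dist]; omega

end UnaryColumn

lemma sum_hammingDist_decompRow {k n : ℕ} (y s : Fin n → Fin (k + 1)) :
    ∑ j, hammingDist (fun p => unaryCol k (y p) j) (decompRow k n s j)
      = ∑ p, Nat.dist (y p) (s p) := by
  simp only [decompRow_eq_unaryCol]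
  rw [sum_hammingDist_transpose]
  exact sum_congr rfl fun p _ => hammingDist_unaryCol (y p).is_le (s p).is_le

theorem ballTotal_eq_setOf_sum_dist_le (k n e : ℕ) (s : Fin n → Fin (k + 1)) :
    ballTotal k n e s = {y | ∑ p, Nat.dist (y p) (s p) ≤ e} := by
  ext y
  constructor
  · rintro ⟨r, hdist, hvalid, hrecon⟩
    have hr : r = fun j p => unaryCol k (y p) j := by
      funext j p
      rw [hrecon p]
      exact congrFun (hvalid p).eq_unaryCol j
    subst hr
    rwa [Set.mem_ofPred_eq, ← sum_hammingDist_decompRow]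
  · intro hy
    refine ⟨fun j p => unaryCol k (y p) j, ?_, fun p => validCol_unaryCol _, fun p => ?_⟩
    · rwa [sum_hammingDist_decompRow]
    · exact (reconAt_unaryCol (y p).is_le).symm

/-- For `s ∈ {0,…,k}^n` with `m` positions taking a value in `{1,…,k-1}`, the composite
error ball of radius `1` (at most one substitution in any one of the `k` channels)
centered at `s` has size exactly `1 + n + m`. -/
theorem stmt_8 (k n : ℕ) (hk : 0 < k) (s : Fin n → Fin (k + 1)) :
    (ballTotal k n 1 s).ncard
      = 1 + n + (Finset.univ.filter fun p =>
          (s p : ℕ) ≠ 0 ∧ (s p : ℕ) ≠ k).card := by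
  have hdist (a b : Fin (k + 1)) : Nat.dist a b = 0 ↔ a = b := by
    rw [← Fin.val_inj]
    exact ⟨Nat.eq_of_dist_eq_zero, Nat.dist_eq_zero⟩
  rw [ballTotal_eq_setOf_sum_dist_le,
    ncard_setOf_sum_le_one (fun a b : Fin (k + 1) => Nat.dist a b) hdist,
    sum_congr rfl fun p _ => card_filter_dist_eq_one hk (s p), sum_add_distrib, card_filter]
  simp [add_assoc]
end

section
/- Let s ∈ {0,1,2}^n have j zeros and m ones. Then the composite error ball of radius (1,1) centered at s has size 2n + 1 + m(n-1) + j(n-m-j). -/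
/-!
A valid column is determined by its number of ones, so the ball is in bijection with the pairs
of rows, each within Hamming distance one of the corresponding row of `s`, whose columns all stay
nondecreasing. Such a row is the row of `s` with at most one bit flipped, so these pairs are
counted by the flip positions `(a, b) ∈ Option (Fin n) × Option (Fin n)` that keep every column
valid. With `A = {p | s p ≠ 0}` (where flipping only row 0 is harmless) and `B = {p | s p ≠ 2}`
(the same for row 1), the valid patterns are: no flip; `a ∈ A` alone; `b ∈ B` alone; `a = b` at a
letter other than `1` (exchanging `0` and `2`); and `a ≠ b` with `a ∈ A`, `b ∈ B`. Hence
`|ball| + |A ∩ B| = 1 + |A| + |B| + |{p | s p ≠ 1}| + |A| |B|`, which is the formula in terms of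
the letter counts.
-/

open Finset Function

lemma sum_comp_eq_sum_card_smul {ι κ M : Type*} [Fintype ι] [Fintype κ] [DecidableEq κ]
    [AddCommMonoid M] (s : ι → κ) (f : κ → M) :
    ∑ p, f (s p) = ∑ i, #{p | s p = i} • f i := by
  rw [← sum_fiberwise' univ s f]
  simp only [sum_const]

section Reconstruction

variable {k n : ℕ}

instance : DecidablePred (validCol k) := fun _ => by unfold validCol; infer_instance

lemma validCol.isUpperSet {c : Fin k → Bool} (hc : validCol k c) :
    IsUpperSet {j | c j = true} :=
  fun _ _ hjj' hj => hc _ _ hjj' hj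

lemma validCol.eq_of_reconAt_eq {c c' : Fin k → Bool} (hc : validCol k c) (hc' : validCol k c')
    (h : reconAt k c = reconAt k c') : c = c' := by
  suffices key : univ.filter (fun j => c j = true) = univ.filter (fun j => c' j = true) by
    funext j
    simpa using congrArg (j ∈ ·) key
  -- upper sets of a chain are nested, and nested finsets of equal size coincide
  rcases hc.isUpperSet.total hc'.isUpperSet with hsub | hsub
  · exact eq_of_subset_of_card_le (fun j => by simpa using @hsub j) h.ge
  · exact (eq_of_subset_of_card_le (fun j => by simpa using @hsub j) h.le).symm

lemma reconAt_le (c : Fin k → Bool) : reconAt k c ≤ k :=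
  (card_filter_le _ _).trans (card_fin k).le

def recon (r : Fin k → Fin n → Bool) (p : Fin n) : Fin (k + 1) :=
  ⟨reconAt k fun j => r j p, Nat.lt_succ_of_le (reconAt_le _)⟩

lemma injOn_recon :
    Set.InjOn (recon (k := k) (n := n)) {r | ∀ p, validCol k fun j => r j p} := by
  intro r hr r' hr' h
  funext j p
  exact congrFun ((hr p).eq_of_reconAt_eq (hr' p) (congrArg Fin.val (congrFun h p))) j

def validRowsBall (k n : ℕ) (e : Fin k → ℕ) (s : Fin n → Fin (k + 1)) :
    Set (Fin k → Fin n → Bool) :=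
  {r | (∀ j, hammingDist (r j) (decompRow k n s j) ≤ e j) ∧ ∀ p, validCol k fun j => r j p}

lemma ballTuple_eq_image (e : Fin k → ℕ) (s : Fin n → Fin (k + 1)) :
    ballTuple k n e s = recon '' validRowsBall k n e s := by
  ext y
  constructor
  · rintro ⟨r, hdist, hval, hy⟩
    exact ⟨r, ⟨hdist, hval⟩, funext fun p => Fin.ext (hy p).symm⟩
  · rintro ⟨r, ⟨hdist, hval⟩, rfl⟩
    exact ⟨r, hdist, hval, fun p => rfl⟩

theorem ncard_ballTuple (e : Fin k → ℕ) (s : Fin n → Fin (k + 1)) :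
    (ballTuple k n e s).ncard = (validRowsBall k n e s).ncard := by
  rw [ballTuple_eq_image]
  exact (injOn_recon.mono fun _ hr => hr.2).ncard_image

end Reconstruction

section FlipAt

variable {ι : Type*} [DecidableEq ι]

def flipAt (d : ι → Bool) (a : Option ι) (p : ι) : Bool :=
  xor (d p) (decide (a = some p))

@[simp] lemma flipAt_none (d : ι → Bool) : flipAt d none = d := by
  funext p; simp [flipAt]

lemma flipAt_injective (d : ι → Bool) : Injective (flipAt d) := fun a b h =>
  Option.ext fun p => by simpa [flipAt] using congrFun h p

lemma forall_decide_eq_some_iff {α : Type*} (s : ι → α) {F : α → Bool → Bool → Prop}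
    (hF : ∀ i, F i false false) (a b : Option ι) :
    (∀ t, F (s t) (decide (a = some t)) (decide (b = some t))) ↔
      (∀ p ∈ a, F (s p) true (decide (b = some p))) ∧
        (∀ q ∈ b, F (s q) (decide (a = some q)) true) := by
  refine ⟨fun h => ⟨fun p hp => ?_, fun q hq => ?_⟩, fun ⟨ha, hb⟩ t => ?_⟩
  · simpa [Option.mem_def.mp hp] using h p
  · simpa [Option.mem_def.mp hq] using h q
  · by_cases hat : a = some t
    · simpa [hat] using ha t hat
    · by_cases hbt : b = some t
      · simpa [hbt] using hb t hbt
      · simpa [hat, hbt] using hF (s t)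

variable [Fintype ι]

lemma hammingDist_flipAt_some_le (d : ι → Bool) (p : ι) :
    hammingDist (flipAt d (some p)) d ≤ 1 :=
  calc hammingDist (flipAt d (some p)) d ≤ #{p} :=
        card_le_card fun t => by by_cases ht : p = t <;> simp [flipAt, ht]
    _ = 1 := card_singleton p

lemma hammingDist_le_one_iff_exists_flipAt {f d : ι → Bool} :
    hammingDist f d ≤ 1 ↔ ∃ a, flipAt d a = f := by
  refine ⟨fun h => ?_, ?_⟩
  · rcases Nat.le_one_iff_eq_zero_or_eq_one.mp h with h0 | h1
    · exact ⟨none, by rw [flipAt_none, hammingDist_eq_zero.mp h0]⟩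
    · obtain ⟨p, hp⟩ := card_eq_one.mp h1
      refine ⟨some p, funext fun t => ?_⟩
      have hdiff : f t ≠ d t ↔ t = p := by simpa using congrArg (t ∈ ·) hp
      by_cases ht : t = p
      · subst ht
        simpa [flipAt] using (Bool.eq_not.mpr (hdiff.mpr rfl)).symm
      · simpa [flipAt, Ne.symm ht] using (not_not.mp (hdiff.not.mpr ht)).symm
  · rintro ⟨_ | p, rfl⟩
    · simp
    · exact hammingDist_flipAt_some_le d p

end FlipAt

def validFlips (k n : ℕ) (s : Fin n → Fin (k + 1)) : Finset (Fin k → Option (Fin n)) :=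
  {a | ∀ p, validCol k fun j => flipAt (decompRow k n s j) (a j) p}

theorem ncard_ballTuple_one {k n : ℕ} (s : Fin n → Fin (k + 1)) :
    (ballTuple k n (fun _ => 1) s).ncard = #(validFlips k n s) := by
  set flips := fun (a : Fin k → Option (Fin n)) j => flipAt (decompRow k n s j) (a j)
  have hrows : validRowsBall k n (fun _ => 1) s =
      flips '' {a | ∀ p, validCol k fun j => flips a j p} := by
    ext r
    simp only [validRowsBall, Set.mem_ofPred_eq, Set.mem_image,
      hammingDist_le_one_iff_exists_flipAt]
    constructor
    · rintro ⟨hr, hval⟩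
      choose a ha using hr
      have hra : flips a = r := funext ha
      exact ⟨a, hra ▸ hval, hra⟩
    · rintro ⟨a, ha, rfl⟩
      exact ⟨fun j => ⟨a j, rfl⟩, ha⟩
  have hinj : Injective flips := fun a b h => funext fun j => flipAt_injective _ (congrFun h j)
  rw [ncard_ballTuple, hrows, hinj.injOn.ncard_image, Set.ncard_eq_toFinset_card',
    Set.toFinset_ofPred, validFlips]

section ResolutionTwo

lemma validCol_two_iff {c : Fin 2 → Bool} : validCol 2 c ↔ (c 0 = true → c 1 = true) := by
  revert c; decide

/-- Validity of the column of the letter `i` after flipping row `0` iff `x` and row `1` iff `y`. -/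
def FlipValid (i : Fin 3) (x y : Bool) : Prop :=
  xor (decide (2 ≤ (i : ℕ))) x = true → xor (decide (1 ≤ (i : ℕ))) y = true

instance (i : Fin 3) (x y : Bool) : Decidable (FlipValid i x y) := by
  unfold FlipValid; infer_instance

lemma flipValid_false_false (i : Fin 3) : FlipValid i false false := by revert i; decide
lemma flipValid_true_false_iff (i : Fin 3) : FlipValid i true false ↔ i ≠ 0 := by revert i; decide
lemma flipValid_false_true_iff (i : Fin 3) : FlipValid i false true ↔ i ≠ 2 := by revert i; decide

variable {n : ℕ}

lemma validCol_flipAt_decompRow_two (s : Fin n → Fin 3) (a : Fin 2 → Option (Fin n))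
    (p : Fin n) : (validCol 2 fun j => flipAt (decompRow 2 n s j) (a j) p) ↔
      FlipValid (s p) (decide (a 0 = some p)) (decide (a 1 = some p)) :=
  validCol_two_iff

lemma sum_sum_flipValid_add (s : Fin n → Fin 3) :
    (∑ p, ∑ q, if FlipValid (s p) true (decide (q = p)) ∧ FlipValid (s q) (decide (p = q)) true
        then 1 else 0) + #{p | s p = 1} =
      #{p | s p ≠ 1} + #{p | s p ≠ 0} * #{p | s p ≠ 2} := by
  have hterm : ∀ p q,
      ((if FlipValid (s p) true (decide (q = p)) ∧ FlipValid (s q) (decide (p = q)) true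
        then 1 else 0) + if p = q ∧ s p = 1 then 1 else 0) =
      (if s p ≠ 0 ∧ s q ≠ 2 then 1 else 0) + if p = q ∧ s p ≠ 1 then 1 else 0 := by
    intro p q
    by_cases hpq : p = q
    · subst hpq
      simp only [decide_true, true_and]
      generalize s p = i
      revert i; decide
    · simp [hpq, Ne.symm hpq, flipValid_true_false_iff, flipValid_false_true_iff]
  calc _ = ∑ p, ∑ q,
        (((if FlipValid (s p) true (decide (q = p)) ∧ FlipValid (s q) (decide (p = q)) true
          then 1 else 0) + if p = q ∧ s p = 1 then 1 else 0) : ℕ) := by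
        simp only [sum_add_distrib, ite_and, sum_ite_eq, mem_univ, if_true, card_filter]
    _ = ∑ p, ∑ q,
        (((if s p ≠ 0 ∧ s q ≠ 2 then 1 else 0) + if p = q ∧ s p ≠ 1 then 1 else 0) : ℕ) := by
        simp only [hterm]
    _ = _ := by
        simp only [sum_add_distrib, ite_and, sum_ite_eq, mem_univ, if_true, card_filter,
          sum_mul_sum, ite_zero_mul_ite_zero, mul_one]
        ring

theorem card_validFlips_two_add (s : Fin n → Fin 3) :
    #(validFlips 2 n s) + #{p | s p = 1} =
      1 + #{p | s p ≠ 2} + #{p | s p ≠ 0} + #{p | s p ≠ 1} + #{p | s p ≠ 0} * #{p | s p ≠ 2} := by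
  rw [validFlips, card_filter]
  simp only [validCol_flipAt_decompRow_two]
  rw [← (piFinTwoEquiv fun _ => Option (Fin n)).symm.sum_comp, Fintype.sum_prod_type]
  simp only [piFinTwoEquiv_symm_apply, Fin.cons_zero, Fin.cons_one, Fintype.sum_option,
    forall_decide_eq_some_iff s flipValid_false_false, Option.mem_def, Option.some_inj, forall_eq',
    reduceCtorEq, decide_false, flipValid_true_false_iff, flipValid_false_true_iff,
    IsEmpty.forall_iff, implies_true, and_true, true_and, if_true, sum_add_distrib]
  have h := sum_sum_flipValid_add s
  simp only [card_filter] at h ⊢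
  linarith

end ResolutionTwo

/-- For `s ∈ {0,1,2}^n` with `j` zeros and `m` ones, the composite error ball of radius
`(1,1)` centered at `s` has size `2n + 1 + m(n-1) + j(n-m-j)`. -/
theorem stmt_9 (n : ℕ) (s : Fin n → Fin 3)
    (j m : ℕ)
    (hj : j = (Finset.univ.filter fun p => (s p : ℕ) = 0).card)
    (hm : m = (Finset.univ.filter fun p => (s p : ℕ) = 1).card) :
    (ballTuple 2 n (fun _ => 1) s).ncard
      = 2 * n + 1 + m * (n - 1) + j * (n - m - j) := by
  set l := #{p | (s p : ℕ) = 2}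
  have hcard (P : Fin 3 → Prop) [DecidablePred P] : #{p | P (s p)} =
      j * (if P 0 then 1 else 0) + m * (if P 1 then 1 else 0) + l * (if P 2 then 1 else 0) := by
    have hfiber (i : Fin 3) : #{p | s p = i} = #{p | (s p : ℕ) = i} := by simp only [Fin.ext_iff]
    rw [card_filter, sum_comp_eq_sum_card_smul s fun i => if P i then 1 else 0,
      Fin.sum_univ_three, hfiber, hfiber, hfiber, hj, hm]
    rfl
  have hn : n = j + m + l := by simpa using hcard fun _ => True
  have hcount := card_validFlips_two_add s
  rw [← ncard_ballTuple_one, show #{p | s p = 1} = m by simpa using hcard (· = 1),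
    show #{p | s p ≠ 0} = m + l by simpa using hcard (· ≠ 0),
    show #{p | s p ≠ 1} = j + l by simpa using hcard (· ≠ 1),
    show #{p | s p ≠ 2} = j + m by simpa using hcard (· ≠ 2)] at hcount
  generalize (ballTuple 2 n (fun _ => 1) s).ncard = N at hcount ⊢
  rw [hn, show j + m + l - m - j = l by omega]
  rcases Nat.eq_zero_or_pos m with rfl | hm0
  · linarith
  · have : m ≤ m * (j + m + l) := Nat.le_mul_of_pos_right m (by omega)
    rw [Nat.mul_sub_one]
    zify [this] at hcount ⊢
    linarith
end

section
/- Let X be binomial with parameters n and p = (k-1)/(k+1) for k ≥ 2. Then E[1/(n+X)] ≥ (k+1)/(2kn), and for all n ≥ 1, E[1/(n+X)] ≤ 1/(2kn/(k+1) - 1). Consequently, Σ_{m=0}^n C(n,m)((k-1)/2)^m / (n+m) ≤ ((k+1)/2)^n / (2kn/(k+1) - 1). -/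
/-!
Expanding `1/x` around `μ > 0` gives the exact identity
`1/x = 1/μ - (x - μ)/μ² + (x - μ)²/(x μ²)`. Averaging it over a probability vector whose mean is
`μ` kills the linear term, so the mean of `1/x` is `1/μ` plus a nonnegative remainder, which is at
most `Var/(a μ²)` when all values are at least `a > 0`. For `n + X` with `X ~ Binomial(n, p)` we
have `μ = n(1 + p) = 2kn/(k+1)`, `a = n` and `Var = np(1-p) ≤ n`, so the mean lies between `1/μ`
and `1/μ + 1/μ² ≤ 1/(μ - 1)`. The last inequality is the upper bound multiplied by
`((k+1)/2)^n`, since `((k+1)/2)^n p^m (1-p)^(n-m) = ((k-1)/2)^m`.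
-/

open Finset Polynomial

theorem bernsteinPolynomial_eval {R : Type*} [CommRing R] (n ν : ℕ) (x : R) :
    (bernsteinPolynomial R n ν).eval x = n.choose ν * x ^ ν * (1 - x) ^ (n - ν) := by
  simp [bernsteinPolynomial]

section BinomialMoments

variable {R : Type*} [CommRing R]

theorem sum_range_choose_mul_pow_mul_one_sub_pow (n : ℕ) (x : R) :
    ∑ m ∈ range (n + 1), (n.choose m : R) * x ^ m * (1 - x) ^ (n - m) = 1 := by
  simpa [eval_finsetSum, bernsteinPolynomial_eval] using
    congr_arg (eval x) (bernsteinPolynomial.sum R n)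

theorem sum_range_choose_mul_pow_mul_one_sub_pow_mul (n : ℕ) (x : R) :
    ∑ m ∈ range (n + 1), (n.choose m : R) * x ^ m * (1 - x) ^ (n - m) * m = n * x := by
  have h := congr_arg (eval x) (bernsteinPolynomial.sum_smul R n)
  simp only [nsmul_eq_mul, eval_finsetSum, eval_mul, eval_natCast, bernsteinPolynomial_eval,
    eval_X] at h
  rw [← h]
  exact sum_congr rfl fun m _ => by ring

theorem sum_range_choose_mul_pow_mul_one_sub_pow_mul_sub_sq (n : ℕ) (x : R) :
    ∑ m ∈ range (n + 1), (n.choose m : R) * x ^ m * (1 - x) ^ (n - m) * (m - n * x) ^ 2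
      = n * x * (1 - x) := by
  have h := congr_arg (eval x) (bernsteinPolynomial.variance R n)
  simp only [nsmul_eq_mul, eval_finsetSum, eval_mul, eval_pow, eval_sub, eval_natCast, eval_X,
    bernsteinPolynomial_eval, eval_one] at h
  rw [← h]
  exact sum_congr rfl fun m _ => by ring

theorem sum_range_choose_mul_pow_mul_one_sub_pow_mul_add (n : ℕ) (x : R) :
    ∑ m ∈ range (n + 1), (n.choose m : R) * x ^ m * (1 - x) ^ (n - m) * (n + m) = n + n * x := by
  simp only [mul_add, sum_add_distrib, ← sum_mul, sum_range_choose_mul_pow_mul_one_sub_pow,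
    sum_range_choose_mul_pow_mul_one_sub_pow_mul, one_mul]

end BinomialMoments

theorem pow_mul_choose_mul_div_pow_mul_one_sub_div_pow {K : Type*} [Field K] {n m : ℕ}
    (h : m ≤ n) (a : K) {r : K} (hr : r ≠ 0) :
    r ^ n * (n.choose m * (a / r) ^ m * (1 - a / r) ^ (n - m))
      = n.choose m * a ^ m * (r - a) ^ (n - m) := by
  rw [one_sub_div hr, div_pow, div_pow, ← Nat.add_sub_cancel' h, pow_add, Nat.add_sub_cancel_left]
  field_simp

theorem inv_eq_inv_sub_add_sq_div {x μ : ℝ} (hx : x ≠ 0) (hμ : μ ≠ 0) :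
    x⁻¹ = μ⁻¹ - (x - μ) / μ ^ 2 + (x - μ) ^ 2 / (x * μ ^ 2) := by
  field_simp
  ring

section WeightedMean

variable {ι : Type*} {s : Finset ι} {w x : ι → ℝ} {μ : ℝ}

theorem sum_div_eq_inv_add_sum_sq_div (hw : ∑ i ∈ s, w i = 1) (hmean : ∑ i ∈ s, w i * x i = μ)
    (hx : ∀ i ∈ s, x i ≠ 0) (hμ : μ ≠ 0) :
    ∑ i ∈ s, w i / x i = μ⁻¹ + ∑ i ∈ s, w i * (x i - μ) ^ 2 / (x i * μ ^ 2) := by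
  have hcentred : ∑ i ∈ s, w i * (x i - μ) = 0 := by
    simp only [mul_sub, sum_sub_distrib, hmean, ← sum_mul, hw, one_mul, sub_self]
  calc ∑ i ∈ s, w i / x i
      = ∑ i ∈ s, (w i * μ⁻¹ - w i * (x i - μ) / μ ^ 2
          + w i * (x i - μ) ^ 2 / (x i * μ ^ 2)) :=
        sum_congr rfl fun i hi => by
          rw [div_eq_mul_inv, inv_eq_inv_sub_add_sq_div (hx i hi) hμ]
          ring
    _ = μ⁻¹ + ∑ i ∈ s, w i * (x i - μ) ^ 2 / (x i * μ ^ 2) := by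
        rw [sum_add_distrib, sum_sub_distrib, ← sum_mul, ← sum_div, hw, hcentred]
        ring

theorem inv_le_sum_div (hw₀ : ∀ i ∈ s, 0 ≤ w i) (hw : ∑ i ∈ s, w i = 1)
    (hmean : ∑ i ∈ s, w i * x i = μ) (hx : ∀ i ∈ s, 0 < x i) (hμ : 0 < μ) :
    μ⁻¹ ≤ ∑ i ∈ s, w i / x i := by
  rw [sum_div_eq_inv_add_sum_sq_div hw hmean (fun i hi => (hx i hi).ne') hμ.ne']
  refine le_add_of_nonneg_right <| sum_nonneg fun i hi => ?_
  have := hw₀ i hi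
  have := hx i hi
  positivity

theorem sum_div_le_inv_add (hw₀ : ∀ i ∈ s, 0 ≤ w i) (hw : ∑ i ∈ s, w i = 1)
    (hmean : ∑ i ∈ s, w i * x i = μ) {a : ℝ} (ha : 0 < a) (hx : ∀ i ∈ s, a ≤ x i)
    (hμ : 0 < μ) :
    ∑ i ∈ s, w i / x i ≤ μ⁻¹ + (∑ i ∈ s, w i * (x i - μ) ^ 2) / (a * μ ^ 2) := by
  rw [sum_div_eq_inv_add_sum_sq_div hw hmean (fun i hi => (ha.trans_le (hx i hi)).ne') hμ.ne',
    sum_div]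
  gcongr with i hi
  · have := hw₀ i hi
    positivity
  · exact hx i hi

end WeightedMean

theorem inv_le_sum_range_choose_mul_pow_mul_one_sub_pow_div {n : ℕ} {p : ℝ} (hn : 1 ≤ n)
    (hp₀ : 0 ≤ p) (hp₁ : p ≤ 1) :
    ((n : ℝ) + n * p)⁻¹ ≤
      ∑ m ∈ range (n + 1), (n.choose m : ℝ) * p ^ m * (1 - p) ^ (n - m) / (n + m) := by
  have : (1 : ℝ) ≤ n := by exact_mod_cast hn
  exact inv_le_sum_div (fun m _ => by have := sub_nonneg.2 hp₁; positivity)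
    (sum_range_choose_mul_pow_mul_one_sub_pow n p)
    (sum_range_choose_mul_pow_mul_one_sub_pow_mul_add n p) (fun m _ => by positivity)
    (by positivity)

theorem sum_range_choose_mul_pow_mul_one_sub_pow_div_le {n : ℕ} {p : ℝ} (hn : 1 ≤ n)
    (hp₀ : 0 ≤ p) (hp₁ : p ≤ 1) :
    ∑ m ∈ range (n + 1), (n.choose m : ℝ) * p ^ m * (1 - p) ^ (n - m) / (n + m) ≤
      ((n : ℝ) + n * p)⁻¹ + p * (1 - p) / (n + n * p) ^ 2 := by
  have : (1 : ℝ) ≤ n := by exact_mod_cast hn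
  have hvar : ∑ m ∈ range (n + 1), (n.choose m : ℝ) * p ^ m * (1 - p) ^ (n - m) *
      ((n + m) - (n + n * p)) ^ 2 = n * p * (1 - p) := by
    rw [← sum_range_choose_mul_pow_mul_one_sub_pow_mul_sub_sq]
    exact sum_congr rfl fun m _ => by ring
  calc _ ≤ ((n : ℝ) + n * p)⁻¹ + (n * p * (1 - p)) / (n * (n + n * p) ^ 2) := by
        rw [← hvar]
        exact sum_div_le_inv_add (fun m _ => by have := sub_nonneg.2 hp₁; positivity)
          (sum_range_choose_mul_pow_mul_one_sub_pow n p)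
          (sum_range_choose_mul_pow_mul_one_sub_pow_mul_add n p) (by positivity)
          (fun m _ => by simp) (by positivity)
    _ = _ := by field_simp

theorem inv_add_div_sq_le_inv_sub_one {μ v : ℝ} (hμ : 1 < μ) (hv : v ≤ 1) :
    μ⁻¹ + v / μ ^ 2 ≤ (μ - 1)⁻¹ := by
  have hμ₀ : 0 < μ - 1 := sub_pos.2 hμ
  calc μ⁻¹ + v / μ ^ 2 ≤ μ⁻¹ + 1 / (μ * (μ - 1)) := by
        have : μ * (μ - 1) ≤ μ ^ 2 := by nlinarith
        exact add_le_add le_rfl (div_le_div₀ zero_le_one hv (by positivity) this)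
    _ = (μ - 1)⁻¹ := by
        field_simp
        ring

/-- Let `X` be binomial with parameters `n ≥ 1` and `p = (k-1)/(k+1)`, `k ≥ 2`. Then
`E[1/(n+X)] ≥ (k+1)/(2kn)` and `E[1/(n+X)] ≤ 1/(2kn/(k+1) - 1)`; consequently
`∑_{m=0}^n C(n,m)((k-1)/2)^m / (n+m) ≤ ((k+1)/2)^n / (2kn/(k+1) - 1)`. -/
theorem stmt_17 (k n : ℕ) (hk : 2 ≤ k) (hn : 1 ≤ n) :
    let p : ℝ := ((k : ℝ) - 1) / ((k : ℝ) + 1)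
    -- the expectation `E[1/(n+X)]` for `X ~ Binomial(n, p)`
    let E : ℝ := ∑ m ∈ Finset.range (n + 1),
      (n.choose m : ℝ) * p ^ m * (1 - p) ^ (n - m) * (1 / ((n : ℝ) + m))
    ((k : ℝ) + 1) / (2 * k * n) ≤ E ∧
    E ≤ 1 / (2 * (k : ℝ) * n / ((k : ℝ) + 1) - 1) ∧
    ∑ m ∈ Finset.range (n + 1),
        (n.choose m : ℝ) * (((k : ℝ) - 1) / 2) ^ m / ((n : ℝ) + m)
      ≤ (((k : ℝ) + 1) / 2) ^ n / (2 * (k : ℝ) * n / ((k : ℝ) + 1) - 1) := by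
  intro p E
  have hk' : (2 : ℝ) ≤ k := by exact_mod_cast hk
  have hn' : (1 : ℝ) ≤ n := by exact_mod_cast hn
  have hp₀ : 0 ≤ p := div_nonneg (by linarith) (by linarith)
  have hp₁ : p ≤ 1 := (div_le_one (by linarith)).2 (by linarith)
  have hE : E = ∑ m ∈ range (n + 1), (n.choose m : ℝ) * p ^ m * (1 - p) ^ (n - m) / (n + m) := by
    simp only [E, mul_one_div]
  have hμ : (n : ℝ) + n * p = 2 * k * n / (k + 1) := by
    simp only [p]
    field_simp
    ring
  have hμ₁ : 1 < (n : ℝ) + n * p := by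
    rw [hμ, lt_div_iff₀ (by linarith)]
    nlinarith
  have hupper : E ≤ 1 / (2 * k * n / (k + 1) - 1) := by
    rw [one_div, ← hμ, hE]
    exact (sum_range_choose_mul_pow_mul_one_sub_pow_div_le hn hp₀ hp₁).trans
      (inv_add_div_sq_le_inv_sub_one hμ₁ (by nlinarith))
  refine ⟨?_, hupper, ?_⟩
  · rw [← inv_div, ← hμ, hE]
    exact inv_le_sum_range_choose_mul_pow_mul_one_sub_pow_div hn hp₀ hp₁
  · have hp : p = ((k : ℝ) - 1) / 2 / ((k + 1) / 2) := by
      simp only [p]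
      field_simp
    have hsum : ∑ m ∈ range (n + 1), (n.choose m : ℝ) * (((k : ℝ) - 1) / 2) ^ m / ((n : ℝ) + m)
        = (((k : ℝ) + 1) / 2) ^ n * E := by
      rw [hE, mul_sum]
      refine sum_congr rfl fun m hm => ?_
      rw [← mul_div_assoc, hp, pow_mul_choose_mul_div_pow_mul_one_sub_div_pow
        (Nat.lt_succ_iff.1 (mem_range.1 hm)) _ (by positivity)]
      ring
    rw [hsum]
    exact (mul_le_mul_of_nonneg_left hupper (by positivity)).trans_eq (mul_one_div _ _)
end

section
/- For all natural numbers n, Σ_{m=0}^n C(n,m) Σ_{j=0}^{n-m} C(n-m,j) · 1/((j+1)(n-m-j+1)) ≤ 3^(n+2)/((n+1)(n+2)). -/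
/-!
Both `(j + 1)(N - j + 1)` and `(N - m + 1)(N - m + 2)` are absorbed into a binomial coefficient
with top index raised by two: `C(N, j) / ((j + 1)(N - j + 1)) = C(N + 2, j + 1) / ((N + 1)(N + 2))`
and `C(n, m) / ((n - m + 1)(n - m + 2)) = C(n + 2, m) / ((n + 1)(n + 2))`. The inner sum is then
`(2 ^ (N + 2) - 2) / ((N + 1)(N + 2))`, and the outer sum becomes
`∑ₘ C(n + 2, m) (2 ^ (n + 2 - m) - 2) / ((n + 1)(n + 2))`, bounded by the binomial expansion of
`(1 + 2) ^ (n + 2)`.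
-/

open Finset

namespace Nat

theorem choose_mul_add_one_mul_add_two_eq_choose_add_one {N j : ℕ} (hj : j ≤ N) :
    N.choose j * ((N + 1) * (N + 2)) = (N + 2).choose (j + 1) * ((j + 1) * (N - j + 1)) := by
  have h₁ := add_one_mul_choose_eq N j
  have h₂ := choose_mul_succ_eq (N + 1) (j + 1)
  rw [show N + 1 + 1 - (j + 1) = N - j + 1 by omega] at h₂
  calc N.choose j * ((N + 1) * (N + 2))
      = (N + 1).choose (j + 1) * (N + 1 + 1) * (j + 1) := by
        rw [← mul_assoc, mul_comm _ (N + 1), h₁]; ring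
    _ = (N + 2).choose (j + 1) * ((j + 1) * (N - j + 1)) := by rw [h₂]; ring

theorem choose_mul_add_one_mul_add_two_eq_choose {n m : ℕ} (hm : m ≤ n) :
    n.choose m * ((n + 1) * (n + 2)) = (n + 2).choose m * ((n - m + 1) * (n - m + 2)) := by
  have h₁ := choose_mul_succ_eq n m
  have h₂ := choose_mul_succ_eq (n + 1) m
  rw [show n + 1 - m = n - m + 1 by omega] at h₁
  rw [show n + 1 + 1 - m = n - m + 2 by omega] at h₂
  calc n.choose m * ((n + 1) * (n + 2))
      = (n + 1).choose m * (n + 1 + 1) * (n - m + 1) := by rw [← mul_assoc, h₁]; ring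
    _ = (n + 2).choose m * ((n - m + 1) * (n - m + 2)) := by rw [h₂]; ring

theorem sum_range_choose_add_two_add_one (N : ℕ) :
    ∑ j ∈ range (N + 1), (N + 2).choose (j + 1) + 2 = 2 ^ (N + 2) := by
  rw [← sum_range_choose (N + 2), sum_range_succ' _ (N + 2), sum_range_succ _ (N + 1)]
  simp [add_assoc]

theorem sum_range_choose_mul_two_pow_le_three_pow {k n : ℕ} (hk : k ≤ n + 1) :
    ∑ m ∈ range k, n.choose m * 2 ^ (n - m) ≤ 3 ^ n := by
  calc ∑ m ∈ range k, n.choose m * 2 ^ (n - m)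
      ≤ ∑ m ∈ range (n + 1), n.choose m * 2 ^ (n - m) :=
        sum_le_sum_of_subset (range_subset_range.mpr hk)
    _ = 3 ^ n := by rw [show 3 = 1 + 2 by rfl, add_pow]; simp [mul_comm]

variable {K : Type*} [Field K] [CharZero K]

theorem cast_choose_div_add_one_mul_sub_add_one {N j : ℕ} (hj : j ≤ N) :
    (N.choose j : K) / ((j + 1) * ((N - j : ℕ) + 1)) =
      (N + 2).choose (j + 1) / ((N + 1) * (N + 2)) := by
  rw [div_eq_div_iff (by norm_cast) (by norm_cast)]
  exact_mod_cast choose_mul_add_one_mul_add_two_eq_choose_add_one hj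

theorem cast_choose_div_sub_add_one_mul_sub_add_two {n m : ℕ} (hm : m ≤ n) :
    (n.choose m : K) / (((n - m : ℕ) + 1) * ((n - m : ℕ) + 2)) =
      (n + 2).choose m / ((n + 1) * (n + 2)) := by
  rw [div_eq_div_iff (by norm_cast) (by norm_cast)]
  exact_mod_cast choose_mul_add_one_mul_add_two_eq_choose hm

theorem sum_cast_choose_div_add_one_mul_sub_add_one (N : ℕ) :
    ∑ j ∈ range (N + 1), (N.choose j : K) / ((j + 1) * ((N - j : ℕ) + 1)) =
      (2 ^ (N + 2) - 2) / ((N + 1) * (N + 2)) := by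
  rw [sum_congr rfl fun j hj ↦ cast_choose_div_add_one_mul_sub_add_one (mem_range_succ_iff.mp hj),
    ← sum_div]
  congr 1
  rw [eq_sub_iff_add_eq]
  exact_mod_cast sum_range_choose_add_two_add_one N

end Nat

/-- `∑_{m=0}^n C(n,m) ∑_{j=0}^{n-m} C(n-m,j) / ((j+1)(n-m-j+1)) ≤ 3^(n+2)/((n+1)(n+2))`. -/
theorem stmt_18 (n : ℕ) :
    ∑ m ∈ Finset.range (n + 1), (n.choose m : ℚ) *
        ∑ j ∈ Finset.range (n - m + 1),
          ((n - m).choose j : ℚ) * (1 / (((j : ℚ) + 1) * (((n - m - j : ℕ) : ℚ) + 1)))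
      ≤ 3 ^ (n + 2) / (((n : ℚ) + 1) * ((n : ℚ) + 2)) := by
  simp only [mul_one_div, Nat.sum_cast_choose_div_add_one_mul_sub_add_one]
  calc ∑ m ∈ range (n + 1), (n.choose m : ℚ) *
        ((2 ^ (n - m + 2) - 2) / (((n - m : ℕ) + 1) * ((n - m : ℕ) + 2)))
      = (∑ m ∈ range (n + 1), ((n + 2).choose m : ℚ) * (2 ^ (n + 2 - m) - 2)) /
          ((n + 1) * (n + 2)) := by
        rw [sum_div]
        refine sum_congr rfl fun m hm ↦ ?_
        have hm := mem_range_succ_iff.mp hm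
        rw [mul_div_left_comm, Nat.cast_choose_div_sub_add_one_mul_sub_add_two hm,
          show n + 2 - m = n - m + 2 by omega]
        ring
    _ ≤ (∑ m ∈ range (n + 1), ((n + 2).choose m * 2 ^ (n + 2 - m) : ℕ)) /
          ((n + 1) * (n + 2)) := by
        push_cast
        gcongr with m
        linarith
    _ ≤ 3 ^ (n + 2) / ((n + 1) * (n + 2)) := by
        gcongr
        exact_mod_cast Nat.sum_range_choose_mul_two_pow_le_three_pow (by omega)
end
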